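/- For all integers 1 ≤ n ≤ m, the complete bipartite graph K_{n,m} satisfies gd(K_{n,m}) = n + 1. -/

import Mathlib

/-!
Write a positive semidefinite `X` as the Gram matrix of vectors `x v`.

Upper bound: every edge of `K_{α,β}` has its left endpoint in `α`, so only inner products with
at least one left vector must be kept. Let `K` be the span of the left vectors (dimension at most
`|α|`) and replace every `x v` by `(P x v, ‖x v - P x v‖) ∈ K × ℝ`, `P` the orthogonal projection
onto `K`: this keeps all norms and every inner product `⟪x u, x v⟫` with `x u ∈ K`.

Lower bound: if `Y` is positive semidefinite with `Y a a = Y b b = Y a b`, then `Y (a - b) = 0`, so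
columns `a` and `b` of `Y` agree. Take the left vectors orthonormal, right vertex `i` a copy of left
vertex `i` for `0 < i < n`, and right vertex `0` a unit vector orthogonal to the left vectors.
In any completion `Y` each left vertex but `0` keeps its right twin, which
pins all left-left entries; hence `Y` has the identity as an `(n + 1) × (n + 1)` principal
submatrix.
-/

open Matrix Finset

/-- The Gram dimension of a graph `G`: the smallest integer `k ≥ 1` such that every
positive semidefinite matrix indexed by the vertices admits a positive semidefinite
matrix of rank at most `k` agreeing with it on the diagonal and on the edges of `G`. -/
noncomputable def gd {V : Type} [Fintype V] (G : SimpleGraph V) : ℕ :=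
  sInf {k : ℕ | 1 ≤ k ∧ ∀ X : Matrix V V ℝ, X.PosSemidef →
    ∃ Y : Matrix V V ℝ, Y.PosSemidef ∧ Y.rank ≤ k ∧
      (∀ i, Y i i = X i i) ∧ (∀ i j, G.Adj i j → Y i j = X i j)}

open scoped RealInnerProductSpace ComplexOrder

namespace Matrix

variable {𝕜 : Type*} [RCLike 𝕜] {n : Type*} [Fintype n]

theorem PosSemidef.exists_eq_gram {X : Matrix n n 𝕜} (hX : X.PosSemidef) :
    ∃ x : n → EuclideanSpace 𝕜 n, X = gram 𝕜 x := by
  classical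
  obtain ⟨B, rfl⟩ : ∃ B : Matrix n n 𝕜, X = Bᴴ * B := by
    open scoped MatrixOrder in exact CStarAlgebra.nonneg_iff_eq_star_mul_self.mp hX.nonneg
  refine ⟨fun v => WithLp.toLp 2 (fun k => B k v), ?_⟩
  ext v w
  rw [gram_apply, PiLp.inner_apply, mul_apply]
  simp only [conjTranspose_apply, RCLike.inner_apply, RCLike.star_def]
  exact Finset.sum_congr rfl fun _ _ => mul_comm _ _

theorem rank_gram_le_finrank {E : Type*} [NormedAddCommGroup E] [InnerProductSpace 𝕜 E]
    [FiniteDimensional 𝕜 E] (x : n → E) : (gram 𝕜 x).rank ≤ Module.finrank 𝕜 E := by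
  let b := stdOrthonormalBasis 𝕜 E
  let M : Matrix (Fin (Module.finrank 𝕜 E)) n 𝕜 := .of fun k v => b.repr (x v) k
  have hM : gram 𝕜 x = Mᴴ * M := by
    ext v w
    rw [gram_apply, ← b.repr.inner_map_map, PiLp.inner_apply, mul_apply]
    simp only [M, conjTranspose_apply, of_apply, RCLike.inner_apply, RCLike.star_def]
    exact Finset.sum_congr rfl fun _ _ => mul_comm _ _
  rw [hM]
  exact (rank_mul_le_right _ _).trans (rank_le_card_height M |>.trans_eq (Fintype.card_fin _))

theorem PosSemidef.apply_eq_apply_of_apply_self_eq {A : Matrix n n 𝕜} (hA : A.PosSemidef)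
    {a b : n} (ha : A a a = A a b) (hb : A b b = A a b) (w : n) : A w a = A w b := by
  classical
  have hba : A b a = A a b :=
    calc A b a = star (A a b) := (hA.1.apply b a).symm
      _ = A a a := by rw [← ha, hA.1.apply a a]
      _ = A a b := ha
  have hz : A *ᵥ (Pi.single a 1 - Pi.single b 1) = 0 := by
    rw [← hA.dotProduct_mulVec_zero_iff]
    simp [mulVec_sub, sub_dotProduct, dotProduct_sub, mulVec_single, ha, hb, hba]
  simpa [mulVec_sub, mulVec_single, sub_eq_zero] using congrFun hz w

theorem gram_euclideanSingle_one_apply {ι κ : Type*} [Fintype κ] [DecidableEq κ] (c : ι → κ)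
    (v w : ι) :
    gram ℝ (fun v => EuclideanSpace.single (c v) (1 : ℝ)) v w = if c v = c w then 1 else 0 := by
  simp [gram_apply, EuclideanSpace.inner_single_left]

end Matrix

section ProjLift

variable {E : Type*} [NormedAddCommGroup E] [InnerProductSpace ℝ E]
  (K : Submodule ℝ E) [K.HasOrthogonalProjection]

noncomputable def projLift (x : E) : WithLp 2 (K × ℝ) :=
  WithLp.toLp 2 (K.orthogonalProjectionOnto x, ‖Kᗮ.orthogonalProjectionOnto x‖)

theorem inner_projLift_self (x : E) : ⟪projLift K x, projLift K x⟫ = ⟪x, x⟫ := by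
  rw [WithLp.prod_inner_apply, real_inner_self_eq_norm_sq, real_inner_self_eq_norm_sq,
    real_inner_self_eq_norm_sq, K.norm_sq_eq_add_norm_sq_projection x, projLift, norm_norm]

theorem inner_projLift_of_mem_left {u : E} (hu : u ∈ K) (x : E) :
    ⟪projLift K u, projLift K x⟫ = ⟪u, x⟫ := by
  rw [WithLp.prod_inner_apply]
  simp [projLift, Submodule.orthogonalProjectionOnto_orthogonal_apply_eq_zero hu,
    Submodule.orthogonalProjectionOnto_mem_subspace_eq_self ⟨u, hu⟩]

end ProjLift

namespace SimpleGraph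

variable {V : Type} [Fintype V]

def PartialMatrixEq (G : SimpleGraph V) (X Y : Matrix V V ℝ) : Prop :=
  (∀ i, Y i i = X i i) ∧ ∀ i j, G.Adj i j → Y i j = X i j

theorem PartialMatrixEq.apply_eq_of_twin {G : SimpleGraph V} {X Y : Matrix V V ℝ}
    (hXY : G.PartialMatrixEq X Y) (hX : X.PosSemidef) (hY : Y.PosSemidef) {a b w : V}
    (hab : G.Adj a b) (hwb : G.Adj w b) (ha : X a a = X a b) (hb : X b b = X a b) :
    Y w a = X w a :=
  calc Y w a = Y w b := hY.apply_eq_apply_of_apply_self_eq (by rw [hXY.1, hXY.2 a b hab, ha])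
        (by rw [hXY.1, hXY.2 a b hab, hb]) w
    _ = X w b := hXY.2 w b hwb
    _ = X w a := (hX.apply_eq_apply_of_apply_self_eq ha hb w).symm

end SimpleGraph

section GramDimension

variable {V : Type} [Fintype V] {G : SimpleGraph V}

theorem gd_le {k : ℕ} (hk : 1 ≤ k)
    (h : ∀ X : Matrix V V ℝ, X.PosSemidef →
      ∃ Y : Matrix V V ℝ, Y.PosSemidef ∧ Y.rank ≤ k ∧ G.PartialMatrixEq X Y) :
    gd G ≤ k :=
  Nat.sInf_le ⟨hk, h⟩

theorem le_gd {k : ℕ} {X : Matrix V V ℝ} (hX : X.PosSemidef)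
    (h : ∀ Y : Matrix V V ℝ, Y.PosSemidef → G.PartialMatrixEq X Y → k ≤ Y.rank) :
    k ≤ gd G := by
  refine le_csInf ⟨max 1 (Fintype.card V), le_max_left _ _, fun X hX =>
    ⟨X, hX, X.rank_le_card_width.trans (le_max_right _ _), fun _ => rfl, fun _ _ _ => rfl⟩⟩ ?_
  rintro k' ⟨-, hk'⟩
  obtain ⟨Y, hY, hrank, hXY⟩ := hk' X hX
  exact (h Y hY hXY).trans hrank

theorem gd_le_card_add_one (s : Finset V) (hs : ∀ v w, G.Adj v w → v ∈ s ∨ w ∈ s) :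
    gd G ≤ #s + 1 := by
  refine gd_le (Nat.le_add_left 1 _) fun X hX => ?_
  obtain ⟨x, rfl⟩ := hX.exists_eq_gram
  let K := Submodule.span ℝ (Set.range fun v : s => x v)
  have hmem : ∀ v ∈ s, x v ∈ K := fun v hv => Submodule.subset_span ⟨⟨v, hv⟩, rfl⟩
  refine ⟨gram ℝ (projLift K ∘ x), posSemidef_gram _ _, ?_, fun v => ?_, fun v w hvw => ?_⟩
  · have hK : Module.finrank ℝ K ≤ #s :=
      (finrank_range_le_card (R := ℝ) fun v : s => x v).trans_eq (Fintype.card_coe s)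
    calc (gram ℝ (projLift K ∘ x)).rank ≤ Module.finrank ℝ (WithLp 2 (K × ℝ)) :=
          rank_gram_le_finrank _
      _ = Module.finrank ℝ K + 1 := by
          rw [(WithLp.linearEquiv 2 ℝ (K × ℝ)).finrank_eq, Module.finrank_prod,
            Module.finrank_self]
      _ ≤ #s + 1 := by omega
  · exact inner_projLift_self K (x v)
  · rcases hs v w hvw with hv | hw
    · exact inner_projLift_of_mem_left K (hmem v hv) (x w)
    · exact (real_inner_comm _ _).symm.trans
        ((inner_projLift_of_mem_left K (hmem w hw) (x v)).trans (real_inner_comm _ _))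

end GramDimension

theorem gd_completeBipartiteGraph_le (α β : Type) [Fintype α] [Fintype β] :
    gd (completeBipartiteGraph α β) ≤ Fintype.card α + 1 := by
  simpa using gd_le_card_add_one (G := completeBipartiteGraph α β) (univ.map .inl)
    (by rintro (_ | _) (_ | _) <;> simp)

def twinClass (n m : ℕ) : Fin n ⊕ Fin m → Option (Fin n) :=
  Sum.elim some fun j => if h : 0 < (j : ℕ) ∧ (j : ℕ) < n then some ⟨j, h.2⟩ else none

theorem add_one_le_gd_completeBipartiteGraph {n m : ℕ} (h1 : 1 ≤ n) (h2 : n ≤ m) :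
    n + 1 ≤ gd (completeBipartiteGraph (Fin n) (Fin m)) := by
  set X := gram ℝ fun v => EuclideanSpace.single (twinClass n m v) (1 : ℝ)
  have hX : ∀ v w, X v w = if twinClass n m v = twinClass n m w then 1 else 0 :=
    gram_euclideanSingle_one_apply _
  have hXpsd : X.PosSemidef := posSemidef_gram ℝ _
  refine le_gd hXpsd fun Y hY hXY => ?_
  have hleft : ∀ i i' : Fin n, (i' : ℕ) ≠ 0 → Y (.inl i) (.inl i') = X (.inl i) (.inl i') := by
    intro i i' hi'
    refine hXY.apply_eq_of_twin hXpsd hY (b := .inr (Fin.castLE h2 i'))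
      (by simp) (by simp) ?_ ?_ <;> simp [hX, twinClass, hi']
  let f : Option (Fin n) → Fin n ⊕ Fin m := fun a => a.elim (.inr ⟨0, by omega⟩) .inl
  have hf : ∀ a, twinClass n m (f a) = a := by
    rintro (_ | i) <;> simp [f, twinClass]
  have hpin : ∀ a b, Y (f a) (f b) = X (f a) (f b) := by
    rintro (_ | i) (_ | i')
    · exact hXY.1 _
    · exact hXY.2 _ _ (by simp [f])
    · exact hXY.2 _ _ (by simp [f])
    · rcases eq_or_ne i i' with rfl | hne
      · exact hXY.1 _
      by_cases hi' : (i' : ℕ) = 0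
      · calc Y (f i) (f i') = Y (f i') (f i) := (hY.1.apply _ _).symm.trans (star_trivial _)
          _ = X (f i') (f i) := hleft i' i fun hi => hne (Fin.ext (hi.trans hi'.symm))
          _ = X (f i) (f i') := by simp only [hX, eq_comm]
      · exact hleft i i' hi'
  have hsub : Y.submatrix f f = 1 := by
    ext a b
    rw [submatrix_apply, hpin, hX, hf, hf, one_apply]
  calc n + 1 = (1 : Matrix (Option (Fin n)) (Option (Fin n)) ℝ).rank := by simp [rank_one]
    _ ≤ Y.rank := hsub ▸ rank_submatrix_le Y f f

theorem gd_completeBipartiteGraph (n m : ℕ) (h1 : 1 ≤ n) (h2 : n ≤ m) :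
    gd (completeBipartiteGraph (Fin n) (Fin m)) = n + 1 :=
  le_antisymm ((gd_completeBipartiteGraph_le _ _).trans_eq (by simp))
    (add_one_le_gd_completeBipartiteGraph h1 h2)
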